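/- arXiv:1611.07407 — 5 statements merged into one kernel-verified Lean document; each statement's English description precedes it below -/
import Mathlib

section
/- Let G be a simple undirected graph with vertex set {1,...,n} and Seidel adjacency matrix S(G). A bipartition {X,Y} of {1,...,n} is a bi-join of G if and only if both submatrices S(G)[X,Y] and S(G)[Y,X] have rank at most 1. -/
open Matrix Finset

/-- Rank of the submatrix of `A` with row indices in `X` and column indices in `Y`. -/
noncomputable def subRank {n : ℕ} {K : Type*} [Field K] (A : Matrix (Fin n) (Fin n) K)
    (X Y : Finset (Fin n)) : ℕ :=
  (A.submatrix (fun i : {a // a ∈ X} => i.1) (fun j : {a // a ∈ Y} => j.1)).rank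

/-- The Seidel adjacency matrix of a graph: `0` on the diagonal, `-1` for edges and
`+1` for non-edges. -/
def seidel {n : ℕ} (G : SimpleGraph (Fin n)) [DecidableRel G.Adj] :
    Matrix (Fin n) (Fin n) ℚ :=
  fun i j => if i = j then 0 else if G.Adj i j then -1 else 1

/-!
Off the diagonal, the Seidel matrix is the `±1` sign matrix of adjacency, and the block
`S[Y,X]` is the transpose of `S[X,Y]`. A sign matrix of rank at most one has vanishing
`2 × 2` minors, which for `±1` entries is a parity condition; anchoring it at one row and one
column shows that `x ~ y ↔ (p x ↔ q y)` for predicates `p`, `q`, i.e. a bi-join with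
`X1 = p`, `Y1 = q`. Conversely such a pattern makes the sign matrix an outer product.
-/

namespace Matrix

variable {α β K : Type*}

theorem mul_eq_mul_of_rank_le_one [Fintype β] [CommRing K] [IsDomain K] {M : Matrix α β K}
    (hM : M.rank ≤ 1) (i k : α) (j l : β) : M i j * M k l = M i l * M k j := by
  set B : Matrix (Fin 2) (Fin 2) K := M.submatrix ![i, k] ![j, l]
  have hdet : B.det = 0 := by
    by_contra h
    have := (rank_of_det_ne_zero h).symm.trans_le ((rank_submatrix_le _ _ _).trans hM)
    simp at this
  rw [det_fin_two] at hdet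
  exact sub_eq_zero.mp hdet

def signMatrix (K : Type*) [One K] [Neg K] (R : α → β → Prop) [∀ i j, Decidable (R i j)] :
    Matrix α β K :=
  of fun i j => if R i j then -1 else 1

theorem ite_neg_one_one_mul_eq_iff [Ring K] [NeZero (2 : K)] (a b c d : Prop)
    [Decidable a] [Decidable b] [Decidable c] [Decidable d] :
    (if a then -1 else 1 : K) * (if b then -1 else 1) =
        (if c then -1 else 1) * (if d then -1 else 1) ↔ ((a ↔ b) ↔ (c ↔ d)) := by
  have h : (-1 : K) ≠ 1 := fun h =>
    two_ne_zero (one_add_one_eq_two (R := K) ▸ neg_eq_iff_add_eq_zero.mp h)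
  by_cases a <;> by_cases b <;> by_cases c <;> by_cases d <;> simp_all [h.symm]

variable (R : α → β → Prop) [∀ i j, Decidable (R i j)]

theorem signMatrix_eq_vecMulVec [CommRing K] (p : α → Prop) (q : β → Prop)
    [DecidablePred p] [DecidablePred q] (h : ∀ i j, R i j ↔ (p i ↔ q j)) :
    signMatrix K R =
      vecMulVec (fun i => if p i then 1 else -1) (fun j => if q j then -1 else 1) := by
  ext i j
  by_cases hp : p i <;> by_cases hq : q j <;> simp [signMatrix, vecMulVec_apply, h, hp, hq]

theorem rank_signMatrix_le_one_iff [Fintype β] [Field K] [NeZero (2 : K)] :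
    (signMatrix K R).rank ≤ 1 ↔ ∃ (p : α → Prop) (q : β → Prop), ∀ i j, R i j ↔ (p i ↔ q j) := by
  classical
  constructor
  · intro hR
    rcases isEmpty_or_nonempty (α × β) with h | ⟨⟨i₀, j₀⟩⟩
    · exact ⟨fun _ => True, fun _ => True, fun i j => isEmptyElim (i, j)⟩
    refine ⟨fun i => R i j₀ ↔ R i₀ j₀, fun j => R i₀ j, fun i j => ?_⟩
    have hminor := (ite_neg_one_one_mul_eq_iff (K := K) _ _ _ _).1
      (mul_eq_mul_of_rank_le_one hR i i₀ j j₀)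
    tauto
  · rintro ⟨p, q, h⟩
    rw [signMatrix_eq_vecMulVec R p q h]
    exact rank_vecMulVec_le _ _

end Matrix

namespace SimpleGraph

variable {V : Type*} [Fintype V] [DecidableEq V] (G : SimpleGraph V) [DecidableRel G.Adj]

def IsBijoin (X Y : Finset V) : Prop :=
  ∃ X1 ⊆ X, ∃ Y1 ⊆ Y,
    (∀ x ∈ X1, G.neighborFinset x ∩ Y = Y1) ∧ (∀ x ∈ X \ X1, G.neighborFinset x ∩ Y = Y \ Y1)

theorem isBijoin_iff (X Y : Finset V) :
    G.IsBijoin X Y ↔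
      ∃ (p : X → Prop) (q : Y → Prop), ∀ (x : X) (y : Y), G.Adj x y ↔ (p x ↔ q y) := by
  classical
  constructor
  · rintro ⟨X1, -, Y1, -, hin, hout⟩
    refine ⟨fun x => x.1 ∈ X1, fun y => y.1 ∈ Y1, fun ⟨x, hx⟩ ⟨y, hy⟩ => ?_⟩
    by_cases hx1 : x ∈ X1
    · simpa [hx1, hy] using Finset.ext_iff.mp (hin x hx1) y
    · simpa [hx1, hy] using Finset.ext_iff.mp (hout x (mem_sdiff.mpr ⟨hx, hx1⟩)) y
  · rintro ⟨p, q, h⟩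
    refine ⟨X.filter fun x => ∃ hx : x ∈ X, p ⟨x, hx⟩, filter_subset _ _,
      Y.filter fun y => ∃ hy : y ∈ Y, q ⟨y, hy⟩, filter_subset _ _, ?_, ?_⟩
    · intro x hx
      obtain ⟨hxX, hpx⟩ := (mem_filter.mp hx).2
      ext y
      by_cases hy : y ∈ Y
      · simp [hy, h ⟨x, hxX⟩ ⟨y, hy⟩, hpx]
      · simp [hy]
    · intro x hx
      obtain ⟨hxX, hpx⟩ := mem_sdiff.mp hx
      ext y
      by_cases hy : y ∈ Y
      · simp_all [h ⟨x, hxX⟩ ⟨y, hy⟩]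
      · simp [hy]

end SimpleGraph

theorem subRank_comm_of_isSymm {n : ℕ} {K : Type*} [Field K] {A : Matrix (Fin n) (Fin n) K}
    (hA : A.IsSymm) (X Y : Finset (Fin n)) : subRank A Y X = subRank A X Y := by
  rw [subRank, ← rank_transpose, transpose_submatrix, hA.eq, subRank]

section Seidel

variable {n : ℕ} (G : SimpleGraph (Fin n)) [DecidableRel G.Adj]

theorem seidel_isSymm : (seidel G).IsSymm :=
  IsSymm.ext fun i j => by simp [seidel, eq_comm, G.adj_comm]

theorem subRank_seidel_eq_rank_signMatrix {X Y : Finset (Fin n)} (hXY : Disjoint X Y) :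
    subRank (seidel G) X Y = (signMatrix ℚ fun (x : X) (y : Y) => G.Adj x y).rank := by
  rw [subRank]
  congr 1
  ext ⟨x, hx⟩ ⟨y, hy⟩
  have hxy : x ≠ y := fun h => disjoint_left.mp hXY hx (h ▸ hy)
  simp [seidel, signMatrix, hxy]

end Seidel

theorem bijoin_iff_HL_bipartition_seidel_general {n : ℕ} (G : SimpleGraph (Fin n))
    [DecidableRel G.Adj] (X Y : Finset (Fin n))
    (hD : Disjoint X Y) :
    (∃ X1 ⊆ X, ∃ Y1 ⊆ Y,
        (∀ x ∈ X1, G.neighborFinset x ∩ Y = Y1) ∧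
        (∀ x ∈ X \ X1, G.neighborFinset x ∩ Y = Y \ Y1)) ↔
      subRank (seidel G) X Y ≤ 1 ∧ subRank (seidel G) Y X ≤ 1 := by
  rw [subRank_comm_of_isSymm (seidel_isSymm G) X Y, and_self,
    subRank_seidel_eq_rank_signMatrix G hD, rank_signMatrix_le_one_iff]
  exact G.isBijoin_iff X Y

/-- A bipartition `{X, Y}` of the vertex set of a graph `G` is a bi-join of `G` if and only
if both off-diagonal blocks `S(G)[X,Y]` and `S(G)[Y,X]` of the Seidel adjacency matrix
have rank at most `1`. -/
theorem bijoin_iff_HL_bipartition_seidel {n : ℕ} (G : SimpleGraph (Fin n))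
    [DecidableRel G.Adj] (X Y : Finset (Fin n)) (hX : X.Nonempty) (hY : Y.Nonempty)
    (hD : Disjoint X Y) (hU : X ∪ Y = Finset.univ) :
    (∃ X1 ⊆ X, ∃ Y1 ⊆ Y,
        (∀ x ∈ X1, G.neighborFinset x ∩ Y = Y1) ∧
        (∀ x ∈ X \ X1, G.neighborFinset x ∩ Y = Y \ Y1)) ↔
      subRank (seidel G) X Y ≤ 1 ∧ subRank (seidel G) Y X ≤ 1 :=
  bijoin_iff_HL_bipartition_seidel_general G X Y hD
end

section
/- Let A be an invertible n×n matrix over a field and suppose B = A⁻¹. For any partition {X,Y} of [n], {X,Y} is an HL-bipartition of A if and only if it is an HL-bipartition of B. -/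
open Matrix Finset

/-!
Let `R` be the subspace of vectors vanishing on `X`, so that `A[X, Xᶜ]` is the map
`R → K^X, v ↦ (A v)|_X`. Its kernel consists of the `v ∈ R` with `A v ∈ R`, which `A` maps onto
`R ⊓ A R`; hence `rank A[X, Xᶜ] = |Xᶜ| - dim (R ⊓ A R)`. As `A⁻¹` maps `R ⊓ A R` onto `A⁻¹ R ⊓ R`,
the same defect occurs for `A⁻¹`, so `A` and `A⁻¹` have off-diagonal blocks of equal rank
(the nullity theorem). Applying this to `X` and to `Xᶜ` gives the theorem.
-/

open Function LinearMap Module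

theorem Matrix.mulVecLin_submatrix_of_injective {k l m n R : Type*} [CommSemiring R]
    [Fintype l] [Fintype n] (M : Matrix k l R) (r : m → k) {c : n → l} (hc : Injective c) :
    (M.submatrix r c).mulVecLin = funLeft R R r ∘ₗ M.mulVecLin ∘ₗ ExtendByZero.linearMap R c := by
  refine LinearMap.ext fun v => funext fun i => ?_
  simp only [LinearMap.comp_apply, funLeft_apply, mulVecLin_apply, ExtendByZero.linearMap_apply,
    mulVec, dotProduct, submatrix_apply]
  refine Fintype.sum_of_injective c hc _ _ (fun j hj => ?_) fun j => by rw [hc.extend_apply]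
  rw [extend_apply' _ _ _ hj, Pi.zero_apply, mul_zero]

theorem range_extendByZero_compl_eq_ker_funLeft {ι R : Type*} [Fintype ι] [DecidableEq ι]
    [Semiring R] (X : Finset ι) :
    range (ExtendByZero.linearMap R ((↑) : ↥Xᶜ → ι)) = ker (funLeft R R ((↑) : X → ι)) := by
  have not_mem_range {i : ι} (hi : i ∈ X) : ¬∃ j : ↥Xᶜ, (j : ι) = i :=
    fun ⟨j, hj⟩ => mem_compl.1 j.2 (hj ▸ hi)
  ext w
  constructor
  · rintro ⟨v, rfl⟩
    ext ⟨i, hi⟩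
    exact extend_apply' _ _ _ (not_mem_range hi)
  · intro hw
    refine ⟨fun j => w j, funext fun i => ?_⟩
    rw [ExtendByZero.linearMap_apply]
    by_cases hi : i ∈ X
    · rw [extend_apply' _ _ _ (not_mem_range hi)]
      exact (congrFun hw ⟨i, hi⟩).symm
    · exact Subtype.val_injective.extend_apply _ _ (⟨i, mem_compl.2 hi⟩ : ↥Xᶜ)

theorem LinearMap.finrank_range_comp_add_finrank_ker_inf_range {K U V W : Type*} [DivisionRing K]
    [AddCommGroup U] [Module K U] [FiniteDimensional K U] [AddCommGroup V] [Module K V]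
    [AddCommGroup W] [Module K W] {f : U →ₗ[K] V} (hf : Injective f) (p : V →ₗ[K] W) :
    finrank K (range (p ∘ₗ f)) + finrank K ↥(ker p ⊓ range f) = finrank K U := by
  rw [← (p ∘ₗ f).finrank_range_add_finrank_ker, ker_comp, inf_comm, ← Submodule.map_comap_eq,
    (Submodule.equivMapOfInjective f hf _).finrank_eq]

theorem LinearEquiv.finrank_inf_map_symm {K V : Type*} [DivisionRing K] [AddCommGroup V]
    [Module K V] (e : V ≃ₗ[K] V) (W : Submodule K V) :
    finrank K ↥(W ⊓ W.map (e.symm : V →ₗ[K] V)) = finrank K ↥(W ⊓ W.map (e : V →ₗ[K] V)) := by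
  rw [← e.finrank_map_eq, Submodule.map_inf _ e.injective, (Submodule.map_symm_eq_iff e).mp rfl,
    inf_comm]

section

variable {ι K : Type*} [Fintype ι] [DecidableEq ι] [Field K]

theorem Matrix.rank_submatrix_compl_add_finrank_inf_map (A : Matrix ι ι K)
    (hA : Injective A.mulVecLin) (X : Finset ι) :
    (A.submatrix ((↑) : X → ι) ((↑) : ↥Xᶜ → ι)).rank +
        finrank K ↥(ker (funLeft K K ((↑) : X → ι)) ⊓
          (ker (funLeft K K ((↑) : X → ι))).map A.mulVecLin) =
      Fintype.card ↥Xᶜ := by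
  have hext : Injective (ExtendByZero.linearMap K ((↑) : ↥Xᶜ → ι)) :=
    extend_injective Subtype.val_injective (0 : ι → K)
  have := finrank_range_comp_add_finrank_ker_inf_range
    (f := A.mulVecLin ∘ₗ ExtendByZero.linearMap K _) (hA.comp hext) (funLeft K K ((↑) : X → ι))
  rwa [← mulVecLin_submatrix_of_injective _ _ Subtype.val_injective, range_comp,
    range_extendByZero_compl_eq_ker_funLeft, finrank_fintype_fun_eq_card] at this

theorem Matrix.rank_submatrix_compl_nonsing_inv (A : Matrix ι ι K) (hA : IsUnit A)
    (X : Finset ι) :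
    (A⁻¹.submatrix ((↑) : X → ι) ((↑) : ↥Xᶜ → ι)).rank =
      (A.submatrix ((↑) : X → ι) ((↑) : ↥Xᶜ → ι)).rank := by
  have hdet := (isUnit_iff_isUnit_det A).mp hA
  let e : (ι → K) ≃ₗ[K] (ι → K) := .ofLinearMap A.mulVecLin A⁻¹.mulVecLin
    (by rw [← mulVecLin_mul, mul_nonsing_inv A hdet, mulVecLin_one])
    (by rw [← mulVecLin_mul, nonsing_inv_mul A hdet, mulVecLin_one])
  have h := rank_submatrix_compl_add_finrank_inf_map A e.injective X
  have hinv := rank_submatrix_compl_add_finrank_inf_map A⁻¹ e.symm.injective X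
  set R := ker (funLeft K K ((↑) : X → ι))
  have hsymm : finrank K ↥(R ⊓ R.map A⁻¹.mulVecLin) = finrank K ↥(R ⊓ R.map A.mulVecLin) :=
    e.finrank_inf_map_symm R
  omega

end

theorem HL_bipartition_iff_inverse_general {n : ℕ} {K : Type*} [Field K]
    (A B : Matrix (Fin n) (Fin n) K) (hA : IsUnit A) (hB : B = A⁻¹)
    (X : Finset (Fin n)) :
    (subRank A X Xᶜ ≤ 1 ∧ subRank A Xᶜ X ≤ 1) ↔
      (subRank B X Xᶜ ≤ 1 ∧ subRank B Xᶜ X ≤ 1) := by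
  subst hB
  have hblock (Y : Finset (Fin n)) : subRank A⁻¹ Y Yᶜ = subRank A Y Yᶜ :=
    rank_submatrix_compl_nonsing_inv A hA Y
  have hblock_compl := hblock Xᶜ
  rw [compl_compl] at hblock_compl
  rw [hblock, hblock_compl]

/-- If `A` is invertible with inverse `B`, then for any partition `{X, Xᶜ}` of `[n]`,
`{X, Xᶜ}` is an HL-bipartition of `A` iff it is an HL-bipartition of `B`. -/
theorem HL_bipartition_iff_inverse {n : ℕ} {K : Type*} [Field K]
    (A B : Matrix (Fin n) (Fin n) K) (hA : IsUnit A) (hB : B = A⁻¹)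
    (X : Finset (Fin n)) (hX : X.Nonempty) (hXc : Xᶜ.Nonempty) :
    (subRank A X Xᶜ ≤ 1 ∧ subRank A Xᶜ X ≤ 1) ↔
      (subRank B X Xᶜ ≤ 1 ∧ subRank B Xᶜ X ≤ 1) :=
  HL_bipartition_iff_inverse_general A B hA hB X
end

section
/- Let A be a diagonal-less matrix obtained from a symmetric labelled 2-structure, i.e., A is an n×n symmetric matrix. If X and X' are clans of g_A that overlap (X∩X', X∖X', X'∖X all nonempty), then the symmetric difference X Δ X' is also a clan of g_A. -/
open Matrix Set

/-- `X` is a clan of the labelled 2-structure `g_A` associated to the matrix `A`. -/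
def IsClanOfMatrix {n : ℕ} {α : Type*} (A : Matrix (Fin n) (Fin n) α) (X : Set (Fin n)) :
    Prop :=
  ∀ a ∈ X, ∀ b ∈ X, ∀ x ∉ X, A a x = A b x ∧ A x a = A x b

/-! Through a common point, every outside point sees `X ∪ X'` uniformly. Inside `X ∩ X'`,
a point `x` is seen from `a ∈ X \ X'` as `a` sees any `e ∈ X' \ X`, hence as any
`d ∈ X \ X'` sees `e`; from the other side it is seen as `e` sees `d`, and symmetry of `A`
identifies the two values. -/

namespace IsClanOfMatrix

variable {n : ℕ} {α : Type*} {A : Matrix (Fin n) (Fin n) α} {X X' : Set (Fin n)}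

theorem of_isSymm (hsymm : A.IsSymm)
    (h : ∀ a ∈ X, ∀ b ∈ X, ∀ x ∉ X, A a x = A b x) : IsClanOfMatrix A X :=
  fun a ha b hb x hx => ⟨h a ha b hb x hx, by rw [hsymm.apply, h a ha b hb x hx, hsymm.apply]⟩

theorem union (hX : IsClanOfMatrix A X) (hX' : IsClanOfMatrix A X')
    (hinter : (X ∩ X').Nonempty) : IsClanOfMatrix A (X ∪ X') := by
  obtain ⟨c, hcX, hcX'⟩ := hinter
  have to_c : ∀ a ∈ X ∪ X', ∀ x ∉ X ∪ X', A a x = A c x ∧ A x a = A x c := by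
    rintro a (haX | haX') x hx
    · exact hX a haX c hcX x fun h => hx (Or.inl h)
    · exact hX' a haX' c hcX' x fun h => hx (Or.inr h)
  intro a ha b hb x hx
  obtain ⟨hax, hxa⟩ := to_c a ha x hx
  obtain ⟨hbx, hxb⟩ := to_c b hb x hx
  exact ⟨hax.trans hbx.symm, hxa.trans hxb.symm⟩

theorem apply_eq_of_mem_sdiff (hX : IsClanOfMatrix A X) (hX' : IsClanOfMatrix A X')
    {a d e x : Fin n} (ha : a ∈ X \ X') (hd : d ∈ X \ X') (he : e ∈ X' \ X) (hx : x ∈ X') :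
    A a x = A d e :=
  calc A a x = A a e := (hX' x hx e he.1 a ha.2).2
    _ = A d e := (hX a ha.1 d hd.1 e he.2).1

theorem apply_eq_of_mem_symmDiff (hsymm : A.IsSymm) (hX : IsClanOfMatrix A X)
    (hX' : IsClanOfMatrix A X') {d e x y : Fin n} (hd : d ∈ X \ X') (he : e ∈ X' \ X)
    (hx : x ∈ X ∩ X') (hy : y ∈ symmDiff X X') : A y x = A d e := by
  rcases hy with hy | hy
  · exact hX.apply_eq_of_mem_sdiff hX' hy hd he hx.2
  · exact (hX'.apply_eq_of_mem_sdiff hX hy he hd hx.1).trans (hsymm.apply d e)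

end IsClanOfMatrix

/-- If `A` is a symmetric `n × n` matrix and `X`, `X'` are overlapping clans of the
(symmetric) labelled 2-structure `g_A`, then the symmetric difference `X Δ X'` is also a
clan of `g_A`. -/
theorem symmDiff_clan_of_symmetric {n : ℕ} {α : Type*} (A : Matrix (Fin n) (Fin n) α)
    (hsymm : A.IsSymm) (X X' : Set (Fin n))
    (hX : IsClanOfMatrix A X) (hX' : IsClanOfMatrix A X')
    (hov : (X ∩ X').Nonempty ∧ (X \ X').Nonempty ∧ (X' \ X).Nonempty) :
    IsClanOfMatrix A (symmDiff X X') := by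
  obtain ⟨hinter, ⟨d, hd⟩, ⟨e, he⟩⟩ := hov
  refine IsClanOfMatrix.of_isSymm hsymm fun a ha b hb x hx => ?_
  by_cases hxX : x ∈ X ∩ X'
  · exact (hX.apply_eq_of_mem_symmDiff hsymm hX' hd he hxX ha).trans
      (hX.apply_eq_of_mem_symmDiff hsymm hX' hd he hxX hb).symm
  · have hx_union : x ∉ X ∪ X' := by
      simp only [mem_symmDiff, mem_inter_iff, mem_union] at hx hxX ⊢
      tauto
    exact ((hX.union hX' hinter) a (symmDiff_subset_union ha) b (symmDiff_subset_union hb) x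
      hx_union).1
end

section
/- Let g be a labelled 2-structure on a set V. If X and Y are clans of g that overlap, then X∩Y, X∖Y, Y∖X, and X∪Y are all clans of g. -/
open Set

/-- `X` is a clan of the labelled 2-structure `g` on `V`. -/
def IsClan {V L : Type*} (g : V → V → L) (X : Set V) : Prop :=
  ∀ a ∈ X, ∀ b ∈ X, ∀ x ∉ X, g a x = g b x ∧ g x a = g x b

namespace IsClan

variable {V L : Type*} {g : V → V → L} {X Y : Set V} {a b x : V}

theorem apply_left_eq (hX : IsClan g X) (ha : a ∈ X) (hb : b ∈ X) (hx : x ∉ X) :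
    g a x = g b x :=
  (hX a ha b hb x hx).1

theorem apply_right_eq (hX : IsClan g X) (ha : a ∈ X) (hb : b ∈ X) (hx : x ∉ X) :
    g x a = g x b :=
  (hX a ha b hb x hx).2

theorem inter (hX : IsClan g X) (hY : IsClan g Y) : IsClan g (X ∩ Y) := by
  intro a ha b hb x hx
  by_cases hxX : x ∈ X
  · exact hY a ha.2 b hb.2 x fun hxY => hx ⟨hxX, hxY⟩
  · exact hX a ha.1 b hb.1 x hxX

/-- Every `a ∈ X \ Y` treats a vertex of `X ∩ Y` as it treats a witness `q ∈ Y \ X` (as `Y` is a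
clan), and all of `X \ Y` treat `q` alike (as `X` is a clan). -/
theorem diff (hX : IsClan g X) (hY : IsClan g Y) (hYX : (Y \ X).Nonempty) :
    IsClan g (X \ Y) := by
  obtain ⟨q, hqY, hqX⟩ := hYX
  rintro a ⟨haX, haY⟩ b ⟨hbX, hbY⟩ x hx
  by_cases hxX : x ∈ X
  · have hxY : x ∈ Y := by_contra fun hxY => hx ⟨hxX, hxY⟩
    constructor
    · calc g a x = g a q := hY.apply_right_eq hxY hqY haY
        _ = g b q := hX.apply_left_eq haX hbX hqX
        _ = g b x := hY.apply_right_eq hqY hxY hbY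
    · calc g x a = g q a := hY.apply_left_eq hxY hqY haY
        _ = g q b := hX.apply_right_eq haX hbX hqX
        _ = g x b := hY.apply_left_eq hqY hxY hbY
  · exact hX a haX b hbX x hxX

theorem union (hX : IsClan g X) (hY : IsClan g Y) (hXY : (X ∩ Y).Nonempty) :
    IsClan g (X ∪ Y) := by
  obtain ⟨w, hwX, hwY⟩ := hXY
  intro a ha b hb x hx
  have hxX : x ∉ X := fun h => hx (Or.inl h)
  have hxY : x ∉ Y := fun h => hx (Or.inr h)
  have through_w : ∀ c ∈ X ∪ Y, g c x = g w x ∧ g x c = g x w := by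
    rintro c (hcX | hcY)
    · exact hX c hcX w hwX x hxX
    · exact hY c hcY w hwY x hxY
  obtain ⟨haw₁, haw₂⟩ := through_w a ha
  obtain ⟨hbw₁, hbw₂⟩ := through_w b hb
  exact ⟨haw₁.trans hbw₁.symm, haw₂.trans hbw₂.symm⟩

end IsClan

/-- If `X` and `Y` are overlapping clans of a labelled 2-structure `g` on `V`, then
`X ∩ Y`, `X \ Y`, `Y \ X` and `X ∪ Y` are clans of `g`. -/
theorem clan_overlap_closure {V L : Type*} (g : V → V → L) (X Y : Set V)
    (hX : IsClan g X) (hY : IsClan g Y)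
    (hov : (X ∩ Y).Nonempty ∧ (X \ Y).Nonempty ∧ (Y \ X).Nonempty) :
    IsClan g (X ∩ Y) ∧ IsClan g (X \ Y) ∧ IsClan g (Y \ X) ∧ IsClan g (X ∪ Y) :=
  ⟨hX.inter hY, hX.diff hY hov.2.2, hY.diff hX hov.2.1, hX.union hY hov.1⟩
end

section
/- If A is a symmetric irreducible n×n matrix over a field K, then the family of HL-bipartitions of A is bipartitive; in particular, for any two overlapping HL-bipartitions {X,Y} and {X',Y'} of A, the bipartition {X Δ X', X Δ Y'} is again an HL-bipartition of A. -/
open Matrix Finset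

/-- `{X, Xᶜ}` is an HL-bipartition of `A`. -/
def IsHLBipartition {n : ℕ} {K : Type*} [Field K] (A : Matrix (Fin n) (Fin n) K)
    (X : Finset (Fin n)) : Prop :=
  X.Nonempty ∧ Xᶜ.Nonempty ∧ subRank A X Xᶜ ≤ 1 ∧ subRank A Xᶜ X ≤ 1

/-- The bipartitions `{X, Xᶜ}` and `{X', X'ᶜ}` overlap. -/
def FinsetBipartitionsOverlap {n : ℕ} (X X' : Finset (Fin n)) : Prop :=
  (X ∩ X').Nonempty ∧ (X ∩ X'ᶜ).Nonempty ∧ (Xᶜ ∩ X').Nonempty ∧ (Xᶜ ∩ X'ᶜ).Nonempty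

/-!
For symmetric `A`, `{X, Xᶜ}` is an HL-bipartition iff both parts are nonempty and every `2 × 2`
minor of the block `A[X, Xᶜ]` vanishes. For overlapping `X`, `X'` the block of `X ∩ X'` against
`Xᶜ ∪ X'ᶜ` is glued from the rank-one blocks `A[X ∩ X', Xᶜ]` and `A[X ∩ X', X'ᶜ]`, which share the
columns `Xᶜ ∩ X'ᶜ`: a nonzero entry there aligns the two blocks. If those shared columns vanish,
one of the blocks has only zero columns outside them, for otherwise the rank-one conditions cut
`Xᶜ ∩ X'ᶜ` off from the rest of the matrix, against irreducibility.
The block of `X ∆ X'` against its complement is then checked minor by minor on the four quadrants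
`X ∩ X'`, `X ∩ X'ᶜ`, `Xᶜ ∩ X'`, `Xᶜ ∩ X'ᶜ`; the only minors not inside a quadrant's block combine
one minor of `X` and one of `X'`.
-/

namespace Matrix

variable {K m m' : Type*}

theorem rank_le_one_iff [Field K] [Fintype m'] {M : Matrix m m' K} :
    M.rank ≤ 1 ↔ ∀ i i' j j', M i j * M i' j' = M i' j * M i j' := by
  constructor
  · intro h i i' j j'
    by_contra hne
    have hdet : (M.submatrix ![i, i'] ![j, j']).det ≠ 0 := by
      rw [det_fin_two]
      simpa [sub_eq_zero, mul_comm (M i' j)] using hne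
    have h2 := (rank_of_det_ne_zero hdet).symm.trans_le ((rank_submatrix_le M _ _).trans h)
    simp at h2
  · intro h
    by_cases hM : M = 0
    · simp [hM]
    obtain ⟨i₀, j₀, hM⟩ : ∃ i j, M i j ≠ 0 := by
      by_contra! h0
      exact hM (ext h0)
    have hM : M = vecMulVec (fun i => M i j₀) (fun j => M i₀ j / M i₀ j₀) := by
      ext i j
      rw [vecMulVec_apply, mul_div_assoc', eq_div_iff hM]
      linear_combination h i i₀ j j₀
    exact hM ▸ rank_vecMulVec_le _ _

section RankLeOneOn

variable [CommRing K] {A : Matrix m m' K} {S : Finset m} {T T' : Finset m'}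

def RankLeOneOn (A : Matrix m m' K) (S : Finset m) (T : Finset m') : Prop :=
  ∀ i ∈ S, ∀ i' ∈ S, ∀ j ∈ T, ∀ j' ∈ T, A i j * A i' j' = A i' j * A i j'

theorem RankLeOneOn.mono {S₀ : Finset m} {T₀ : Finset m'} (h : A.RankLeOneOn S T)
    (hS : S₀ ⊆ S) (hT : T₀ ⊆ T) : A.RankLeOneOn S₀ T₀ :=
  fun i hi i' hi' j hj j' hj' => h i (hS hi) i' (hS hi') j (hT hj) j' (hT hj')

theorem RankLeOneOn.symm_of_isSymm {A : Matrix m m K} {S T : Finset m} (hA : A.IsSymm)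
    (h : A.RankLeOneOn S T) : A.RankLeOneOn T S := by
  intro i hi i' hi' j hj j' hj'
  have hminor := h j hj j' hj' i hi i' hi'
  rw [hA.apply i j, hA.apply i' j', hA.apply i j', hA.apply i' j] at hminor
  linear_combination hminor

theorem RankLeOneOn.eq_zero_of_eq_zero [IsDomain K] {i i' : m} {j j' : m'}
    (h : A.RankLeOneOn S T) (hi : i ∈ S) (hi' : i' ∈ S) (hj : j ∈ T) (hj' : j' ∈ T)
    (hij : A i j ≠ 0) (hij' : A i j' = 0) : A i' j' = 0 := by
  have hminor := h i hi i' hi' j hj j' hj'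
  rw [hij', mul_zero] at hminor
  exact (mul_eq_zero.1 hminor).resolve_left hij

theorem RankLeOneOn.union_of_cross [DecidableEq m'] (h : A.RankLeOneOn S T)
    (h' : A.RankLeOneOn S T')
    (hcross : ∀ i ∈ S, ∀ i' ∈ S, ∀ j ∈ T, ∀ j' ∈ T', A i j * A i' j' = A i' j * A i j') :
    A.RankLeOneOn S (T ∪ T') := by
  intro i hi i' hi' j hj j' hj'
  rcases mem_union.1 hj with hj | hj <;> rcases mem_union.1 hj' with hj' | hj'
  · exact h i hi i' hi' j hj j' hj'
  · exact hcross i hi i' hi' j hj j' hj'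
  · linear_combination -hcross i hi i' hi' j' hj' j hj
  · exact h' i hi i' hi' j hj j' hj'

theorem RankLeOneOn.union_of_ne_zero [IsDomain K] [DecidableEq m'] {i₀ : m} {j₀ : m'}
    (h : A.RankLeOneOn S T) (h' : A.RankLeOneOn S T') (hi₀ : i₀ ∈ S) (hj₀ : j₀ ∈ T)
    (hj₀' : j₀ ∈ T') (hne : A i₀ j₀ ≠ 0) : A.RankLeOneOn S (T ∪ T') := by
  refine h.union_of_cross h' fun i hi i' hi' j hj j' hj' => ?_
  -- every column of either block is a multiple of the common column `j₀`
  refine mul_right_cancel₀ (pow_ne_zero 2 hne) ?_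
  linear_combination (A i' j' * A i₀ j₀) * h i hi i₀ hi₀ j hj j₀ hj₀
    + (A i₀ j * A i j₀) * h' i' hi' i₀ hi₀ j' hj' j₀ hj₀'
    - (A i j' * A i₀ j₀) * h i' hi' i₀ hi₀ j hj j₀ hj₀
    - (A i₀ j * A i' j₀) * h' i hi i₀ hi₀ j' hj' j₀ hj₀'

theorem RankLeOneOn.union_of_eq_zero [DecidableEq m'] (h' : A.RankLeOneOn S T')
    (hT : ∀ i ∈ S, ∀ j ∈ T, j ∉ T' → A i j = 0) : A.RankLeOneOn S (T ∪ T') := by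
  have hzero : ∀ i ∈ S, ∀ j ∈ T ∪ T', j ∉ T' → A i j = 0 := fun i hi j hj hjT' =>
    hT i hi j ((mem_union.1 hj).resolve_right hjT') hjT'
  intro i hi i' hi' j hj j' hj'
  by_cases hjT' : j ∈ T'
  · by_cases hj'T' : j' ∈ T'
    · exact h' i hi i' hi' j hjT' j' hj'T'
    · rw [hzero i hi j' hj' hj'T', hzero i' hi' j' hj' hj'T', mul_zero, mul_zero]
  · rw [hzero i hi j hj hjT', hzero i' hi' j hj hjT', zero_mul, zero_mul]

theorem RankLeOneOn.union_union [DecidableEq m] [DecidableEq m'] {S' : Finset m}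
    (hS : A.RankLeOneOn S (T ∪ T')) (hS' : A.RankLeOneOn S' (T ∪ T'))
    (hT : A.RankLeOneOn (S ∪ S') T)
    (hT' : A.RankLeOneOn (S ∪ S') T')
    (hcross : ∀ i ∈ S, ∀ i' ∈ S', ∀ j ∈ T, ∀ j' ∈ T', A i j * A i' j' = A i' j * A i j') :
    A.RankLeOneOn (S ∪ S') (T ∪ T') := by
  refine hT.union_of_cross hT' fun i hi i' hi' j hj j' hj' => ?_
  have hj₁ := mem_union_left T' hj
  have hj'₁ := mem_union_right T hj'
  rcases mem_union.1 hi with hi | hi <;> rcases mem_union.1 hi' with hi' | hi'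
  · exact hS i hi i' hi' j hj₁ j' hj'₁
  · exact hcross i hi i' hi' j hj j' hj'
  · exact (hcross i' hi' i hi j hj j' hj').symm
  · exact hS' i hi i' hi' j hj₁ j' hj'₁

end RankLeOneOn

-- For symmetric `A` this is connectivity of the graph of nonzero off-diagonal entries.
def IsConnected {ι : Type*} [Fintype ι] [DecidableEq ι] [Zero K] (A : Matrix ι ι K) : Prop :=
  ∀ Z : Finset ι, Z.Nonempty → Z ≠ univ → ∃ i ∈ Z, ∃ j ∈ Zᶜ, A i j ≠ 0

theorem isConnected_of_submatrix_ne_zero {ι : Type*} [Fintype ι] [DecidableEq ι] [Zero K]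
    {A : Matrix ι ι K} (h : ∀ Z : Finset ι, Z.Nonempty → Z ≠ univ →
      A.submatrix (fun i : {a // a ∈ Z} => i.1) (fun j : {a // a ∈ Zᶜ} => j.1) ≠ 0) :
    A.IsConnected := by
  intro Z hZ hZu
  by_contra! hzero
  exact h Z hZ hZu (ext fun i j => hzero i i.2 j j.2)

end Matrix

section HLBipartition

open scoped symmDiff

variable {n : ℕ} {K : Type*} [Field K] {A : Matrix (Fin n) (Fin n) K} {X X' : Finset (Fin n)}

theorem subRank_le_one_iff {S T : Finset (Fin n)} : subRank A S T ≤ 1 ↔ A.RankLeOneOn S T :=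
  rank_le_one_iff.trans ⟨fun h i hi i' hi' j hj j' hj' => h ⟨i, hi⟩ ⟨i', hi'⟩ ⟨j, hj⟩ ⟨j', hj'⟩,
    fun h i i' j j' => h i i.2 i' i'.2 j j.2 j' j'.2⟩

theorem isHLBipartition_iff_of_isSymm (hA : A.IsSymm) :
    IsHLBipartition A X ↔ X.Nonempty ∧ Xᶜ.Nonempty ∧ A.RankLeOneOn X Xᶜ := by
  simp only [IsHLBipartition, subRank_le_one_iff]
  exact ⟨fun ⟨hX, hXc, h, _⟩ => ⟨hX, hXc, h⟩,
    fun ⟨hX, hXc, h⟩ => ⟨hX, hXc, h, h.symm_of_isSymm hA⟩⟩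

theorem isHLBipartition_singleton (hn : 2 ≤ n) (v : Fin n) : IsHLBipartition A {v} := by
  refine ⟨singleton_nonempty v, ?_, (rank_le_card_height _).trans (by simp),
    (rank_le_card_width _).trans (by simp)⟩
  rw [← card_pos, card_compl, card_singleton, Fintype.card_fin]
  omega

theorem IsHLBipartition.compl (h : IsHLBipartition A X) : IsHLBipartition A Xᶜ := by
  obtain ⟨hX, hXc, h₁, h₂⟩ := h
  exact ⟨hXc, by rwa [compl_compl], by rwa [compl_compl], by rwa [compl_compl]⟩

theorem FinsetBipartitionsOverlap.compl_left (h : FinsetBipartitionsOverlap X X') :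
    FinsetBipartitionsOverlap Xᶜ X' := by
  obtain ⟨h₁, h₂, h₃, h₄⟩ := h
  exact ⟨h₃, h₄, by rwa [compl_compl], by rwa [compl_compl]⟩

theorem FinsetBipartitionsOverlap.compl_right (h : FinsetBipartitionsOverlap X X') :
    FinsetBipartitionsOverlap X X'ᶜ := by
  obtain ⟨h₁, h₂, h₃, h₄⟩ := h
  exact ⟨h₂, by rwa [compl_compl], h₄, by rwa [compl_compl]⟩

theorem Matrix.IsSymm.apply_compl_inter_compl_eq_zero (hA : A.IsSymm)
    (hX : A.RankLeOneOn X Xᶜ) (hX' : A.RankLeOneOn X' X'ᶜ)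
    (hshared : ∀ i ∈ X ∩ X', ∀ j ∈ Xᶜ ∩ X'ᶜ, A i j = 0)
    (hXc_X' : ∃ i ∈ X ∩ X', ∃ j ∈ Xᶜ ∩ X', A i j ≠ 0)
    (hX_X'c : ∃ i ∈ X ∩ X', ∃ j ∈ X ∩ X'ᶜ, A i j ≠ 0) :
    ∀ s ∈ Xᶜ ∩ X'ᶜ, ∀ t ∈ (Xᶜ ∩ X'ᶜ)ᶜ, A s t = 0 := by
  obtain ⟨i₁, hi₁, j, hj, hij⟩ := hXc_X'
  obtain ⟨i₂, hi₂, j', hj', hij'⟩ := hX_X'c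
  intro s hs t ht
  rw [← hA.apply]
  have hsX := (mem_inter.1 hs).1
  have hsX' := (mem_inter.1 hs).2
  by_cases htX : t ∈ X <;> by_cases htX' : t ∈ X'
  · exact hshared t (mem_inter.2 ⟨htX, htX'⟩) s hs
  · exact hX.eq_zero_of_eq_zero (mem_inter.1 hi₁).1 htX (mem_inter.1 hj).1 hsX hij
      (hshared i₁ hi₁ s hs)
  · exact hX'.eq_zero_of_eq_zero (mem_inter.1 hi₂).2 htX' (mem_inter.1 hj').2 hsX' hij'
      (hshared i₂ hi₂ s hs)
  · exact absurd (mem_inter.2 ⟨mem_compl.2 htX, mem_compl.2 htX'⟩) (mem_compl.1 ht)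

theorem IsHLBipartition.inter (hA : A.IsSymm) (hconn : A.IsConnected)
    (hX : IsHLBipartition A X) (hX' : IsHLBipartition A X')
    (hov : FinsetBipartitionsOverlap X X') : IsHLBipartition A (X ∩ X') := by
  rw [isHLBipartition_iff_of_isSymm hA] at hX hX' ⊢
  obtain ⟨hXX', -, -, hXcX'c⟩ := hov
  have hR := hX.2.2.mono (inter_subset_left : X ∩ X' ⊆ X) subset_rfl
  have hR' := hX'.2.2.mono (inter_subset_right : X ∩ X' ⊆ X') subset_rfl
  refine ⟨hXX', hXcX'c.mono ?_, ?_⟩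
  · rw [compl_inter]
    exact inter_subset_union
  rw [compl_inter]
  by_cases hshared : ∃ i ∈ X ∩ X', ∃ j ∈ Xᶜ ∩ X'ᶜ, A i j ≠ 0
  · obtain ⟨i, hi, j, hj, hij⟩ := hshared
    exact hR.union_of_ne_zero hR' hi (mem_inter.1 hj).1 (mem_inter.1 hj).2 hij
  push Not at hshared
  by_cases hXc_X' : ∃ i ∈ X ∩ X', ∃ j ∈ Xᶜ ∩ X', A i j ≠ 0
  · by_cases hX_X'c : ∃ i ∈ X ∩ X', ∃ j ∈ X ∩ X'ᶜ, A i j ≠ 0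
    · -- then `Xᶜ ∩ X'ᶜ` would be a block of `A` with no entry leaving it
      have hXcX'c_ne : Xᶜ ∩ X'ᶜ ≠ univ := by
        rw [← compl_union, compl_ne_univ_iff_nonempty]
        exact hXX'.mono inter_subset_union
      obtain ⟨s, hs, t, ht, hst⟩ := hconn _ hXcX'c hXcX'c_ne
      exact absurd (hA.apply_compl_inter_compl_eq_zero hX.2.2 hX'.2.2 hshared hXc_X' hX_X'c
        s hs t ht) hst
    push Not at hX_X'c
    rw [union_comm]
    exact hR.union_of_eq_zero fun i hi j hj hjX =>
      hX_X'c i hi j (mem_inter.2 ⟨notMem_compl.1 hjX, hj⟩)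
  push Not at hXc_X'
  exact hR'.union_of_eq_zero fun i hi j hj hjX' =>
    hXc_X' i hi j (mem_inter.2 ⟨hj, notMem_compl.1 hjX'⟩)

theorem IsHLBipartition.inter_quadrants (hA : A.IsSymm) (hconn : A.IsConnected)
    (hX : IsHLBipartition A X) (hX' : IsHLBipartition A X')
    (hov : FinsetBipartitionsOverlap X X') :
    IsHLBipartition A (X ∩ X') ∧ IsHLBipartition A (X ∩ X'ᶜ) ∧
      IsHLBipartition A (Xᶜ ∩ X') ∧ IsHLBipartition A (Xᶜ ∩ X'ᶜ) :=
  ⟨hX.inter hA hconn hX' hov, hX.inter hA hconn hX'.compl hov.compl_right,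
    hX.compl.inter hA hconn hX' hov.compl_left,
    hX.compl.inter hA hconn hX'.compl hov.compl_left.compl_right⟩

theorem IsHLBipartition.symmDiff (hA : A.IsSymm) (hconn : A.IsConnected)
    (hX : IsHLBipartition A X) (hX' : IsHLBipartition A X')
    (hov : FinsetBipartitionsOverlap X X') : IsHLBipartition A (X ∆ X') := by
  obtain ⟨h₁, h₂, h₃, h₄⟩ := hX.inter_quadrants hA hconn hX' hov
  simp only [isHLBipartition_iff_of_isSymm hA] at hX hX' h₁ h₂ h₃ h₄ ⊢
  -- a minor of `X` and a minor of `X'` sharing the entry `A i i'`, read through symmetry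
  have hcross : ∀ i ∈ X ∩ X'ᶜ, ∀ i' ∈ Xᶜ ∩ X', ∀ j ∈ X ∩ X', ∀ j' ∈ Xᶜ ∩ X'ᶜ,
      A i j * A i' j' = A i' j * A i j' := by
    intro i hi i' hi' j hj j' hj'
    simp only [mem_inter] at hi hi' hj hj'
    have hminor := hX.2.2 j hj.1 i hi.1 i' hi'.1 j' hj'.1
    have hminor' := hX'.2.2 j hj.2 i' hi'.2 i hi.2 j' hj'.2
    rw [hA.apply i' j] at hminor
    rw [hA.apply i j, hA.apply i i'] at hminor'
    linear_combination hminor' - hminor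
  have hQ : X ∆ X' = (X ∩ X'ᶜ) ∪ (Xᶜ ∩ X') := by
    ext a; simp only [mem_symmDiff, mem_union, mem_inter, mem_compl]; tauto
  have hQc : (X ∆ X')ᶜ = (X ∩ X') ∪ (Xᶜ ∩ X'ᶜ) := by
    ext a; simp only [mem_compl, mem_symmDiff, mem_union, mem_inter]; tauto
  refine ⟨hov.2.1.mono (hQ ▸ subset_union_left), hov.1.mono (hQc ▸ subset_union_left), ?_⟩
  rw [hQc, hQ]
  refine RankLeOneOn.union_union (h₂.2.2.mono subset_rfl ?_) (h₃.2.2.mono subset_rfl ?_)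
    ((h₁.2.2.symm_of_isSymm hA).mono ?_ subset_rfl)
    ((h₄.2.2.symm_of_isSymm hA).mono ?_ subset_rfl) hcross <;>
  · intro a
    simp only [mem_union, mem_inter, mem_compl]
    tauto

end HLBipartition

/-- If `A` is a symmetric irreducible `n × n` matrix over a field `K`, then the family of
HL-bipartitions of `A` is bipartitive: it contains all singleton bipartitions, is closed
under the four intersection/union operations on overlapping members, and for any two
overlapping HL-bipartitions `{X, Xᶜ}` and `{X', X'ᶜ}`, the bipartition
`{X Δ X', (X Δ X')ᶜ}` (note `X Δ X'ᶜ = (X Δ X')ᶜ`) is again an HL-bipartition of `A`. -/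
theorem HL_family_bipartitive_of_symmetric {n : ℕ} {K : Type*} [Field K] (hn : 2 ≤ n)
    (A : Matrix (Fin n) (Fin n) K) (hsymm : A.IsSymm)
    (hirr : ∀ X : Finset (Fin n), X.Nonempty → X ≠ Finset.univ →
      A.submatrix (fun i : {a // a ∈ X} => i.1) (fun j : {a // a ∈ Xᶜ} => j.1) ≠ 0 ∧
      A.submatrix (fun i : {a // a ∈ Xᶜ} => i.1) (fun j : {a // a ∈ X} => j.1) ≠ 0) :
    (∀ v : Fin n, IsHLBipartition A {v}) ∧
      (∀ X X' : Finset (Fin n), IsHLBipartition A X → IsHLBipartition A X' →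
        FinsetBipartitionsOverlap X X' →
          IsHLBipartition A (X ∩ X') ∧ IsHLBipartition A (X ∩ X'ᶜ) ∧
            IsHLBipartition A (Xᶜ ∩ X') ∧ IsHLBipartition A (Xᶜ ∩ X'ᶜ)) ∧
      ∀ X X' : Finset (Fin n), IsHLBipartition A X → IsHLBipartition A X' →
        FinsetBipartitionsOverlap X X' → IsHLBipartition A (symmDiff X X') := by
  have hconn : A.IsConnected :=
    Matrix.isConnected_of_submatrix_ne_zero fun X hX hXu => (hirr X hX hXu).1
  exact ⟨isHLBipartition_singleton hn,
    fun _ _ hX hX' hov => hX.inter_quadrants hsymm hconn hX' hov,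
    fun _ _ hX hX' hov => hX.symmDiff hsymm hconn hX' hov⟩
end
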